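/- arXiv:0808.0643 — 2 statements merged into one kernel-verified Lean document; each statement's English description precedes it below -/
import Mathlib

section
/- Let α, β, γ ≥ 0 be real numbers and define H(x,s) = s^α (1+s)^{-β} (1+|x|)^{-γ} for x ∈ ℝ^d, s > 0. Fix a > 0 and b > 1. Then there is a constant C > 0 (depending only on a, b, α, β, γ, d) such that for all x ∈ ℝ^d, s > 0, and all y ∈ ℝ^d with |y| ≤ a and all r ∈ [1/b, b], one has H( -(x+s·y)/(s·r), 1/(s·r) ) ≤ C · s^{β-α} (1+s)^{-β} (1+|x|/s)^{-γ}. Equivalently, the right local maximum function of H over the neighborhood U = B(0,a) × [1/b, b] of the identity of the affine group satisfies sup_{(y,r)∈U} |H((y,r)^{-1}(x,s)^{-1})| ≤ C · s^{β-α} (1+s)^{-β} (1+|x|/s)^{-γ}. -/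
/-!
Left multiplication by `g⁻¹` with `g ∈ U = B(0,a) × [1/b, b]` changes each of the quantities
`s`, `1 + s`, `1 + ‖x‖` by at most the factor `b (1 + a)`, in either direction. As `H` is a product
of powers of these with exponents `α, -β, -γ`, we get `H(g⁻¹ h) ≤ (b (1 + a))^(α+β+γ) H(h)`.
Take `h = (x,s)⁻¹`, and note `H((x,s)⁻¹) = s^(β-α) (1+s)^(-β) (1+‖x‖/s)^(-γ)`.
-/

/-- The envelope function `H(x,s) = s^α (1+s)^{-β} (1+|x|)^{-γ}` on the affine group. -/
noncomputable def affEnvelope {d : ℕ} (α β γ : ℝ)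
    (x : EuclideanSpace ℝ (Fin d)) (s : ℝ) : ℝ :=
  s ^ α * (1 + s) ^ (-β) * (1 + ‖x‖) ^ (-γ)

open Real

lemma rpow_le_mul_rpow_of_le_mul {u v c p : ℝ} (hu : 0 ≤ u) (hc : 0 ≤ c) (hv : 0 ≤ v)
    (hp : 0 ≤ p) (h : u ≤ c * v) : u ^ p ≤ c ^ p * v ^ p :=
  (rpow_le_rpow hu h hp).trans_eq (mul_rpow hc hv)

lemma rpow_neg_le_mul_rpow_neg_of_le_mul {u v c p : ℝ} (hu : 0 < u) (hc : 0 ≤ c) (hv : 0 < v)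
    (hp : 0 ≤ p) (h : v ≤ c * u) : u ^ (-p) ≤ c ^ p * v ^ (-p) := by
  have hvu := rpow_le_mul_rpow_of_le_mul hv.le hc hu.le hp h
  rw [rpow_neg hu.le, rpow_neg hv.le, ← div_eq_mul_inv, le_div_iff₀ (rpow_pos_of_pos hv p),
    inv_mul_le_iff₀ (rpow_pos_of_pos hu p)]
  linarith

lemma one_add_le_mul_one_add_of_le {a b r u v : ℝ} (ha : 0 ≤ a) (hb : 1 ≤ b) (hr : r ≤ b)
    (hu : 0 ≤ u) (h : v ≤ r * u + a) : 1 + v ≤ b * (1 + a) * (1 + u) := by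
  nlinarith [mul_le_mul_of_nonneg_right hr hu, mul_nonneg (mul_nonneg ha hu) (by linarith : 0 ≤ b)]

section affEnvelope

variable {d : ℕ} {α β γ : ℝ}

theorem affEnvelope_le_mul_of_comparable {c s s' : ℝ} {x x' : EuclideanSpace ℝ (Fin d)}
    (hα : 0 ≤ α) (hβ : 0 ≤ β) (hγ : 0 ≤ γ) (hs : 0 < s) (hs' : 0 < s') (h_le : s ≤ c * s')
    (h_one_add : 1 + s' ≤ c * (1 + s)) (h_norm : 1 + ‖x'‖ ≤ c * (1 + ‖x‖)) :
    affEnvelope α β γ x s ≤ c ^ (α + β + γ) * affEnvelope α β γ x' s' := by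
  have hc : 0 < c := pos_of_mul_pos_left (hs.trans_le h_le) hs'.le
  have h₁ := rpow_le_mul_rpow_of_le_mul hs.le hc.le hs'.le hα h_le
  have h₂ := rpow_neg_le_mul_rpow_neg_of_le_mul (by positivity) hc.le (by positivity) hβ h_one_add
  have h₃ := rpow_neg_le_mul_rpow_neg_of_le_mul (by positivity) hc.le (by positivity) hγ h_norm
  calc affEnvelope α β γ x s
      ≤ (c ^ α * s' ^ α) * (c ^ β * (1 + s') ^ (-β)) * (c ^ γ * (1 + ‖x'‖) ^ (-γ)) := by
        unfold affEnvelope; gcongr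
    _ = c ^ (α + β + γ) * affEnvelope α β γ x' s' := by
        rw [rpow_add hc, rpow_add hc]
        unfold affEnvelope; ring

/-- `(r⁻¹ • (w - y), r⁻¹ * u)` is the product `(y,r)⁻¹ · (w,u)` in the affine group. -/
theorem affEnvelope_inv_mul_le {a b r u : ℝ} {w y : EuclideanSpace ℝ (Fin d)}
    (hα : 0 ≤ α) (hβ : 0 ≤ β) (hγ : 0 ≤ γ) (hb : 1 ≤ b) (hy : ‖y‖ ≤ a)
    (hr : r ∈ Set.Icc (1 / b) b) (hu : 0 < u) :
    affEnvelope α β γ (r⁻¹ • (w - y)) (r⁻¹ * u) ≤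
      (b * (1 + a)) ^ (α + β + γ) * affEnvelope α β γ w u := by
  obtain ⟨hr₁, hr₂⟩ := hr
  have ha : 0 ≤ a := (norm_nonneg y).trans hy
  have hr₀ : 0 < r := (by positivity : (0 : ℝ) < 1 / b).trans_le hr₁
  have hr_inv : r⁻¹ ≤ b * (1 + a) := by
    rw [one_div, inv_le_comm₀ (by positivity) hr₀] at hr₁
    nlinarith
  refine affEnvelope_le_mul_of_comparable hα hβ hγ (by positivity) hu
    (by gcongr) (one_add_le_mul_one_add_of_le ha hb hr₂ (by positivity) ?_)
    (one_add_le_mul_one_add_of_le ha hb hr₂ (by positivity) ?_)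
  · rw [mul_inv_cancel_left₀ hr₀.ne']
    linarith
  · calc ‖w‖ ≤ ‖w - y‖ + ‖y‖ := norm_le_norm_sub_add w y
      _ ≤ r * ‖r⁻¹ • (w - y)‖ + a := by
        rw [norm_smul_of_nonneg (by positivity), mul_inv_cancel_left₀ hr₀.ne']
        gcongr

lemma affEnvelope_neg_smul_inv (α β γ : ℝ) (x : EuclideanSpace ℝ (Fin d)) {s : ℝ}
    (hs : 0 < s) :
    affEnvelope α β γ (-(s⁻¹ • x)) s⁻¹ = s ^ (β - α) * (1 + s) ^ (-β) * (1 + ‖x‖ / s) ^ (-γ) := by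
  have h_one_add : 1 + s⁻¹ = (1 + s) / s := by field_simp; ring
  rw [affEnvelope, norm_neg, norm_smul_of_nonneg (inv_nonneg.2 hs.le), inv_mul_eq_div,
    h_one_add, div_rpow (by positivity) hs.le, inv_rpow hs.le, ← rpow_neg hs.le,
    rpow_neg hs.le β, sub_eq_neg_add, rpow_add hs]
  field_simp

end affEnvelope

/-- estimate of the right local maximum function of the envelope `H` over the
neighborhood `U = B(0,a) × [1/b, b]` of the identity of the affine group:
`H((y,r)⁻¹ (x,s)⁻¹) = H(-(x+s·y)/(s·r), 1/(s·r)) ≤ C s^{β-α} (1+s)^{-β} (1+|x|/s)^{-γ}`. -/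
theorem affEnvelope_right_local_max_bound (d : ℕ) (α β γ : ℝ)
    (hα : 0 ≤ α) (hβ : 0 ≤ β) (hγ : 0 ≤ γ) (a b : ℝ) (ha : 0 < a) (hb : 1 < b) :
    ∃ C : ℝ, 0 < C ∧
      ∀ (x y : EuclideanSpace ℝ (Fin d)) (s r : ℝ), 0 < s →
        ‖y‖ ≤ a → r ∈ Set.Icc (1 / b) b →
        affEnvelope α β γ (-((s * r)⁻¹ • (x + s • y))) ((s * r)⁻¹) ≤
          C * s ^ (β - α) * (1 + s) ^ (-β) * (1 + ‖x‖ / s) ^ (-γ) := by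
  refine ⟨(b * (1 + a)) ^ (α + β + γ), by positivity, fun x y s r hs hy hr ↦ ?_⟩
  have h_mul : -((s * r)⁻¹ • (x + s • y)) = r⁻¹ • (-(s⁻¹ • x) - y) := by
    rw [mul_inv, smul_add, smul_smul, mul_comm s⁻¹, mul_assoc, inv_mul_cancel₀ hs.ne', mul_one,
      mul_smul]
    module
  calc _ = affEnvelope α β γ (r⁻¹ • (-(s⁻¹ • x) - y)) (r⁻¹ * s⁻¹) := by
        rw [h_mul, mul_inv, mul_comm]
    _ ≤ (b * (1 + a)) ^ (α + β + γ) * affEnvelope α β γ (-(s⁻¹ • x)) s⁻¹ :=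
        affEnvelope_inv_mul_le hα hβ hγ hb.le hy hr (inv_pos.2 hs)
    _ = _ := by rw [affEnvelope_neg_smul_inv _ _ _ _ hs]; ring
end

section
/- Let d ≥ 1, σ ∈ ℝ, and let α, β, γ ≥ 0 be real numbers satisfying γ > d, β > α + σ, and α + σ > 0. Then the integral ∫_{ℝ^d} ∫_0^∞ s^{β-α} (1+s)^{-β} (1 + |x|/s)^{-γ} · s^{-σ} · s^{-(d+1)} ds dx is finite. -/
/-!
Scaling `x = s y` turns the `x`-integral into `s ^ d` times the Japanese-bracket integral
`∫ (1 + ‖y‖) ^ (-γ) dy`, finite for `γ > d`. Swapping the integrals (Tonelli), what remains is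
`∫₀^∞ s ^ (β - α - σ - 1) (1 + s) ^ (-β) ds`, which converges at `0` because `α + σ < β` and at
`∞` because `0 < α + σ`.
-/

open MeasureTheory Set Real Module
open scoped ENNReal

theorem integrableOn_Ioi_rpow_mul_one_add_rpow_neg {a b : ℝ} (ha : -1 < a) (hab : a - b < -1) :
    IntegrableOn (fun s : ℝ => s ^ a * (1 + s) ^ (-b)) (Ioi 0) := by
  have hb : 0 ≤ b := by linarith
  have hmeas : AEStronglyMeasurable (fun s : ℝ => s ^ a * (1 + s) ^ (-b)) :=
    (by fun_prop : Measurable fun s : ℝ => s ^ a * (1 + s) ^ (-b)).aestronglyMeasurable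
  have near_zero : IntegrableOn (fun s : ℝ => s ^ a * (1 + s) ^ (-b)) (Ioc 0 1) := by
    refine (intervalIntegral.intervalIntegrable_rpow' ha).1.mono' hmeas.restrict ?_
    filter_upwards [ae_restrict_mem measurableSet_Ioc] with s hs
    have hs0 : 0 < s := hs.1
    rw [norm_of_nonneg (by positivity)]
    exact mul_le_of_le_one_right (by positivity)
      (rpow_le_one_of_one_le_of_nonpos (by linarith) (by linarith))
  have near_top : IntegrableOn (fun s : ℝ => s ^ a * (1 + s) ^ (-b)) (Ioi 1) := by
    refine (integrableOn_Ioi_rpow_of_lt hab one_pos).mono' hmeas.restrict ?_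
    filter_upwards [ae_restrict_mem measurableSet_Ioi] with s (hs : 1 < s)
    have hs0 : 0 < s := by linarith
    rw [norm_of_nonneg (by positivity), sub_eq_add_neg, rpow_add hs0]
    exact mul_le_mul_of_nonneg_left
      (rpow_le_rpow_of_nonpos hs0 (by linarith) (by linarith)) (by positivity)
  rw [← Ioc_union_Ioi_eq_Ioi zero_le_one]
  exact near_zero.union near_top

section AddHaar

variable {E : Type*} [NormedAddCommGroup E] [NormedSpace ℝ E] [MeasurableSpace E] [BorelSpace E]
  [FiniteDimensional ℝ E] (μ : Measure E) [μ.IsAddHaarMeasure]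

theorem lintegral_comp_inv_smul_of_pos (f : E → ℝ≥0∞) {R : ℝ} (hR : 0 < R) :
    ∫⁻ x, f (R⁻¹ • x) ∂μ = ENNReal.ofReal (R ^ finrank ℝ E) * ∫⁻ x, f x ∂μ := by
  have hR' : R⁻¹ ≠ 0 := inv_ne_zero hR.ne'
  have := lintegral_map_equiv f (MeasurableEquiv.smul₀ R⁻¹ hR') (μ := μ)
  rw [MeasurableEquiv.coe_smul₀] at this
  rw [← this, Measure.map_addHaar_smul μ hR', lintegral_smul_measure, inv_pow, inv_inv,
    abs_of_pos (by positivity), smul_eq_mul]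

theorem lintegral_one_add_norm_div_rpow_neg {s : ℝ} (hs : 0 < s) (γ : ℝ) :
    ∫⁻ x, ENNReal.ofReal ((1 + ‖x‖ / s) ^ (-γ)) ∂μ
      = ENNReal.ofReal (s ^ finrank ℝ E) * ∫⁻ x, ENNReal.ofReal ((1 + ‖x‖) ^ (-γ)) ∂μ := by
  rw [← lintegral_comp_inv_smul_of_pos μ _ hs]
  simp_rw [norm_smul, norm_inv, norm_of_nonneg hs.le, inv_mul_eq_div]

theorem lintegral_affEnvelope_lt_top {σ α β γ : ℝ} (hγ : (finrank ℝ E : ℝ) < γ) (hβ : α + σ < β)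
    (hασ : 0 < α + σ) :
    ∫⁻ x, (∫⁻ s in Ioi (0 : ℝ), ENNReal.ofReal (s ^ (β - α) * (1 + s) ^ (-β) *
      (1 + ‖x‖ / s) ^ (-γ) * s ^ (-σ) * s ^ (-((finrank ℝ E : ℝ) + 1)))) ∂μ < ⊤ := by
  set n := finrank ℝ E
  set I := ∫⁻ y, ENNReal.ofReal ((1 + ‖y‖) ^ (-γ)) ∂μ
  have hI : I < ⊤ := finite_integral_one_add_norm hγ
  have inner : ∀ s ∈ Ioi (0 : ℝ), ∫⁻ x, ENNReal.ofReal (s ^ (β - α) * (1 + s) ^ (-β) *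
      (1 + ‖x‖ / s) ^ (-γ) * s ^ (-σ) * s ^ (-((n : ℝ) + 1))) ∂μ
      = ENNReal.ofReal (s ^ (β - α - σ - 1) * (1 + s) ^ (-β)) * I := by
    intro s (hs : 0 < s)
    have hpow : s ^ (β - α) * s ^ (-σ) * s ^ (-((n : ℝ) + 1))
        = s ^ (β - α - σ - 1) * (s ^ n)⁻¹ := by
      rw [← rpow_add hs, ← rpow_add hs, ← Real.rpow_natCast, ← rpow_neg hs.le, ← rpow_add hs]
      ring_nf
    have hsplit : ∀ x : E, s ^ (β - α) * (1 + s) ^ (-β) * (1 + ‖x‖ / s) ^ (-γ) * s ^ (-σ) *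
        s ^ (-((n : ℝ) + 1))
        = s ^ (β - α - σ - 1) * (1 + s) ^ (-β) * (s ^ n)⁻¹ * (1 + ‖x‖ / s) ^ (-γ) := by
      intro x
      linear_combination (1 + s) ^ (-β) * (1 + ‖x‖ / s) ^ (-γ) * hpow
    rw [lintegral_congr fun x => by rw [hsplit x, ENNReal.ofReal_mul (by positivity)],
      lintegral_const_mul' _ _ ENNReal.ofReal_ne_top, lintegral_one_add_norm_div_rpow_neg μ hs,
      ← mul_assoc, ← ENNReal.ofReal_mul (by positivity), inv_mul_cancel_right₀ (by positivity)]
  rw [lintegral_lintegral_swap (by fun_prop), setLIntegral_congr_fun measurableSet_Ioi inner,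
    lintegral_mul_const' _ _ hI.ne]
  exact ENNReal.mul_lt_top
    (integrableOn_Ioi_rpow_mul_one_add_rpow_neg (by linarith) (by linarith)).setLIntegral_lt_top hI

end AddHaar

theorem affEnvelope_wiener_integral_finite_general (d : ℕ)
    (σ α β γ : ℝ)
    (hγd : (d : ℝ) < γ) (hβ_gt : α + σ < β) (hσ_pos : 0 < α + σ) :
    (∫⁻ x : EuclideanSpace ℝ (Fin d), ∫⁻ s in Set.Ioi (0 : ℝ),
      ENNReal.ofReal
        (s ^ (β - α) * (1 + s) ^ (-β) * (1 + ‖x‖ / s) ^ (-γ) * s ^ (-σ) *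
          s ^ (-((d : ℝ) + 1)))) < ⊤ := by
  have h := lintegral_affEnvelope_lt_top (volume : Measure (EuclideanSpace ℝ (Fin d)))
    (by rwa [finrank_euclideanSpace_fin]) hβ_gt hσ_pos
  rwa [finrank_euclideanSpace_fin] at h

/-- finiteness of
`∫_{ℝ^d} ∫_0^∞ s^{β-α} (1+s)^{-β} (1+|x|/s)^{-γ} s^{-σ} s^{-(d+1)} ds dx`
under the conditions `γ > d` and `β > α + σ > 0`. -/
theorem affEnvelope_wiener_integral_finite (d : ℕ) (hd : 1 ≤ d)
    (σ α β γ : ℝ) (hα : 0 ≤ α) (hβ : 0 ≤ β) (hγ : 0 ≤ γ)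
    (hγd : (d : ℝ) < γ) (hβ_gt : α + σ < β) (hσ_pos : 0 < α + σ) :
    (∫⁻ x : EuclideanSpace ℝ (Fin d), ∫⁻ s in Set.Ioi (0 : ℝ),
      ENNReal.ofReal
        (s ^ (β - α) * (1 + s) ^ (-β) * (1 + ‖x‖ / s) ^ (-γ) * s ^ (-σ) *
          s ^ (-((d : ℝ) + 1)))) < ⊤ :=
  affEnvelope_wiener_integral_finite_general d σ α β γ hγd hβ_gt hσ_pos
end
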